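/- arXiv:2604.02611 — 7 statements merged into one kernel-verified Lean document; each statement's English description precedes it below -/
import Mathlib

section
/- Let N be a positive integer, T ⊆ [N] with |T| ≥ N/2, φ : [N] → [N] an arbitrary function, and π a uniformly random permutation of [N]. Then the probability that there exists ℓ ∈ T with φ(ℓ) = π(ℓ) is at least 1/4. -/
/-!
Let `Z π` be the number of `ℓ ∈ T` with `φ ℓ = π ℓ`, and `t = |T|`. A constraint `π a = b` is met
by `(N - 1)!` permutations and two compatible constraints by `(N - 2)!`, so
`∑ Z = t (N - 1)!` and `∑ Z² ≤ t (N - 1)! + t² (N - 2)!`. Cauchy–Schwarz on the support of `Z`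
(the second-moment method) gives `(∑ Z)² ≤ #{Z ≠ 0} ∑ Z²`, and `N ≤ 2t` makes
`(∑ Z)² / ∑ Z² ≥ N! / 4`.
-/

open Finset Equiv

theorem Finset.sq_sum_le_card_filter_ne_zero_mul_sum_sq {ι R : Type*} [Semiring R] [LinearOrder R]
    [IsStrictOrderedRing R] [ExistsAddOfLE R] (s : Finset ι) (f : ι → R) :
    (∑ i ∈ s, f i) ^ 2 ≤ #{i ∈ s | f i ≠ 0} * ∑ i ∈ s, f i ^ 2 := by
  rw [← sum_filter_ne_zero]
  calc _ ≤ #{i ∈ s | f i ≠ 0} * ∑ i ∈ s with f i ≠ 0, f i ^ 2 := sq_sum_le_card_mul_sum_sq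
    _ ≤ _ := by
      gcongr
      · exact fun i _ _ => sq_nonneg (f i)
      · exact filter_subset _ s

namespace Equiv.Perm

variable {α : Type*} [Fintype α] [DecidableEq α]

theorem card_filter_mul_left (p : Perm α → Prop) [DecidablePred p] (g : Perm α) :
    #{σ | p (g * σ)} = #{σ | p σ} :=
  card_equiv (Equiv.mulLeft g) (by simp)

theorem card_filter_apply_eq_self_and (a : α) (q : Perm α → Prop) [DecidablePred q] :
    #{σ : Perm α | σ a = a ∧ q σ} = #{τ : Perm {x // x ≠ a} | q (ofSubtype τ)} := by
  symm
  refine card_bij (fun τ _ => ofSubtype τ) ?_ (fun _ _ _ _ h => ofSubtype_injective h) ?_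
  · intro τ hτ
    simp only [mem_filter, mem_univ, true_and] at hτ ⊢
    exact ⟨ofSubtype_apply_of_not_mem τ (not_not.mpr rfl), hτ⟩
  · intro σ hσ
    simp only [mem_filter, mem_univ, true_and] at hσ
    have hfix : ∀ x, σ x ≠ a ↔ x ≠ a := fun x => (σ.injective.eq_iff' hσ.1).not
    have hσ' : ofSubtype (σ.subtypePerm hfix) = σ :=
      ofSubtype_subtypePerm (p := (· ≠ a)) hfix fun x hx hxa => hx (hxa ▸ hσ.1)
    exact ⟨σ.subtypePerm hfix, by simpa [hσ'] using hσ.2, hσ'⟩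

theorem card_filter_apply_eq (a b : α) :
    #{σ : Perm α | σ a = b} = (Fintype.card α - 1).factorial := by
  calc #{σ : Perm α | σ a = b} = #{σ : Perm α | (swap a b * σ) a = a ∧ True} := by
        simp [swap_apply_eq_iff]
    _ = #{σ : Perm α | σ a = a ∧ True} := card_filter_mul_left (fun σ => σ a = a ∧ True) _
    _ = (Fintype.card α - 1).factorial := by
        rw [card_filter_apply_eq_self_and, filter_true, Finset.card_univ, Fintype.card_perm,
          Fintype.card_subtype_compl, Fintype.card_subtype_eq]

theorem card_filter_apply_eq_and_apply_eq {a a' b b' : α} (ha : a ≠ a') (hb : b ≠ b') :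
    #{σ : Perm α | σ a = b ∧ σ a' = b'} = (Fintype.card α - 2).factorial := by
  -- left multiplication by `swap a b` trades `σ a = b` for `σ a = a`, i.e. for a permutation of
  -- `{x // x ≠ a}`, on which the remaining constraint is a single one
  set c := swap a b b'
  have hc : c ≠ a := by simp [c, swap_apply_eq_iff, hb.symm]
  calc #{σ : Perm α | σ a = b ∧ σ a' = b'}
        = #{σ : Perm α | (swap a b * σ) a = a ∧ (swap a b * σ) a' = c} := by
        simp [c, swap_apply_eq_iff]
    _ = #{σ : Perm α | σ a = a ∧ σ a' = c} :=
        card_filter_mul_left (fun σ => σ a = a ∧ σ a' = c) _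
    _ = #{τ : Perm {x // x ≠ a} | τ ⟨a', ha.symm⟩ = ⟨c, hc⟩} := by
        rw [card_filter_apply_eq_self_and]
        congr 1
        exact filter_congr fun τ _ => by
          rw [ofSubtype_apply_of_mem (p := (· ≠ a)) τ ha.symm, Subtype.ext_iff]
    _ = (Fintype.card α - 2).factorial := by
        rw [card_filter_apply_eq, Fintype.card_subtype_compl, Fintype.card_subtype_eq]
        rfl

theorem card_filter_apply_eq_and_apply_eq_le {a a' : α} (ha : a ≠ a') (b b' : α) :
    #{σ : Perm α | σ a = b ∧ σ a' = b'} ≤ (Fintype.card α - 2).factorial := by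
  obtain rfl | hb := eq_or_ne b b'
  · refine (card_eq_zero.mpr (filter_eq_empty_iff.mpr fun σ _ h => ?_)).trans_le (Nat.zero_le _)
    exact ha (σ.injective (h.1.trans h.2.symm))
  · exact (card_filter_apply_eq_and_apply_eq ha hb).le

end Equiv.Perm

section MatchCount

variable {α : Type*} [DecidableEq α] (T : Finset α) (φ : α → α)

def matchCount (σ : Perm α) : ℕ := #{ℓ ∈ T | φ ℓ = σ ℓ}

theorem sum_matchCount [Fintype α] :
    ∑ σ : Perm α, matchCount T φ σ = #T * (Fintype.card α - 1).factorial := by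
  rw [← smul_eq_mul, ← sum_const]
  refine (sum_card_bipartiteAbove_eq_sum_card_bipartiteBelow
    (fun (σ : Perm α) ℓ => φ ℓ = σ ℓ)).trans ?_
  refine sum_congr rfl fun ℓ _ => ?_
  simp only [bipartiteBelow, eq_comm (a := φ ℓ)]
  exact Perm.card_filter_apply_eq ℓ (φ ℓ)

theorem matchCount_sq (σ : Perm α) :
    matchCount T φ σ ^ 2 = #{p ∈ T ×ˢ T | φ p.1 = σ p.1 ∧ φ p.2 = σ p.2} := by
  rw [matchCount, sq, ← card_product, ← filter_product]

theorem sum_matchCount_sq_le [Fintype α] :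
    ∑ σ : Perm α, matchCount T φ σ ^ 2 ≤
      #T * (Fintype.card α - 1).factorial + #T * #T * (Fintype.card α - 2).factorial := by
  simp_rw [matchCount_sq]
  refine (sum_card_bipartiteAbove_eq_sum_card_bipartiteBelow
    (fun (σ : Perm α) (p : α × α) => φ p.1 = σ p.1 ∧ φ p.2 = σ p.2)).trans_le ?_
  rw [← diag_union_offDiag, sum_union (disjoint_diag_offDiag _)]
  simp only [bipartiteBelow, eq_comm (a := φ _)]
  apply add_le_add
  · rw [← diag_card, ← smul_eq_mul, ← sum_const]
    refine (sum_congr rfl fun p hp => ?_).le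
    simp only [← (mem_diag.1 hp).2, and_self]
    exact Perm.card_filter_apply_eq _ _
  · refine (sum_le_sum fun p hp =>
      Perm.card_filter_apply_eq_and_apply_eq_le (mem_offDiag.1 hp).2.2 _ _).trans ?_
    rw [sum_const, smul_eq_mul, offDiag_card]
    gcongr
    exact Nat.sub_le _ _

end MatchCount

theorem Nat.factorial_mul_le_four_mul_sq {N t : ℕ} (h : N ≤ 2 * t) :
    N.factorial * (t * (N - 1).factorial + t * t * (N - 2).factorial) ≤
      4 * (t * (N - 1).factorial) ^ 2 := by
  have hsmall : t + t * t ≤ 4 * t ^ 2 := by nlinarith [Nat.le_mul_self t]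
  obtain _ | _ | m := N
  · simpa using hsmall
  · simpa using hsmall
  · have hlin : (m + 2) * (m + 1 + t) ≤ 4 * t * (m + 1) := by nlinarith
    simp only [show m + 2 - 1 = m + 1 by omega, show m + 2 - 2 = m by omega, Nat.factorial_succ]
    calc _ = (m + 2) * (m + 1 + t) * ((m + 1) * t * m.factorial ^ 2) := by ring
      _ ≤ 4 * t * (m + 1) * ((m + 1) * t * m.factorial ^ 2) := by gcongr
      _ = _ := by ring

/-- If `T ⊆ [N]` has `|T| ≥ N/2` and `φ : [N] → [N]` is arbitrary, then for a
uniformly random permutation `π` of `[N]`, the probability that some `ℓ ∈ T` has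
`φ ℓ = π ℓ` is at least `1/4`. -/
theorem stmt0 (N : ℕ) (hN : 0 < N) (T : Finset (Fin N)) (hT : N ≤ 2 * T.card)
    (φ : Fin N → Fin N) :
    (1 : ℝ) / 4 ≤
      ((Finset.univ.filter
          (fun π : Equiv.Perm (Fin N) => ∃ ℓ ∈ T, φ ℓ = π ℓ)).card : ℝ) /
        (Fintype.card (Equiv.Perm (Fin N)) : ℝ) := by
  set A := univ.filter fun π : Perm (Fin N) => ∃ ℓ ∈ T, φ ℓ = π ℓ
  have hA : A = univ.filter (matchCount T φ · ≠ 0) := by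
    ext σ
    simp [A, matchCount]
  have hpos : 0 < ∑ σ, matchCount T φ σ ^ 2 := by
    refine lt_of_lt_of_le ?_ (sum_le_sum fun σ _ => Nat.le_self_pow two_ne_zero _)
    rw [sum_matchCount]
    exact Nat.mul_pos (by omega) (Nat.factorial_pos _)
  have hcount : N.factorial ≤ 4 * #A := by
    refine Nat.le_of_mul_le_mul_right ?_ hpos
    calc N.factorial * ∑ σ, matchCount T φ σ ^ 2
        ≤ N.factorial * (#T * (N - 1).factorial + #T * #T * (N - 2).factorial) := by
          gcongr
          simpa using sum_matchCount_sq_le T φ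
      _ ≤ 4 * (#T * (N - 1).factorial) ^ 2 := Nat.factorial_mul_le_four_mul_sq hT
      _ = 4 * (∑ σ, matchCount T φ σ) ^ 2 := by rw [sum_matchCount, Fintype.card_fin]
      _ ≤ 4 * (#A * ∑ σ, matchCount T φ σ ^ 2) := by
          rw [hA]
          gcongr
          exact sq_sum_le_card_filter_ne_zero_mul_sum_sq _ _
      _ = 4 * #A * ∑ σ, matchCount T φ σ ^ 2 := (mul_assoc _ _ _).symm
  rw [Fintype.card_perm, Fintype.card_fin, div_le_div_iff₀ (by norm_num) (by positivity)]
  have : (N.factorial : ℝ) ≤ 4 * #A := by exact_mod_cast hcount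
  linarith
end

section
/- Let X₁*, ..., Xₙ* be Boolean random variables probed in an order minimizing the expected time ∑_t t·q_t* to find the first active variable, where q_t* = Pr(X_t* = 1, X₁* = 0, ..., X_{t−1}* = 0). Then q₁* ≥ q₂* ≥ ... ≥ qₙ*. -/
/-!
Swap the adjacent probes `i ⋖ j`. Only `q_i` and `q_j` change, and their sum is preserved: both
equal the probability that one of `X_i, X_j` is the first active variable. Hence the expected probing
time changes by exactly `q'_j - q_j`, and optimality gives `q_j ≤ q'_j`. But after the swap `q'_j` is
the probability that `X_i` is the first active variable and `X_j` is inactive, so `q'_j ≤ q_i`.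
Since `Fin n` is locally finite, these adjacent inequalities make `q` antitone.
-/

/-- `q j = Pr(Y j = 1, Y i = 0 ∀ i < j)` for the probing order `Y`. -/
def qprob {Ω : Type*} [Fintype Ω] {n : ℕ} (μ : Ω → ℝ) (Y : Fin n → Ω → Bool)
    (j : Fin n) : ℝ :=
  ∑ ω ∈ Finset.univ.filter
      (fun ω => Y j ω = true ∧ ∀ i : Fin n, i < j → Y i ω = false), μ ω

def expectedProbeTime {Ω : Type*} [Fintype Ω] {n : ℕ} (μ : Ω → ℝ) (Y : Fin n → Ω → Bool) : ℝ :=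
  ∑ t : Fin n, ((t : ℕ) + 1 : ℝ) * qprob μ Y t

theorem CovBy.forall_lt_iff {α : Type*} [LinearOrder α] {a b : α} (hab : a ⋖ b)
    {p : α → Prop} : (∀ c < b, p c) ↔ (∀ c < a, p c) ∧ p a := by
  simp only [hab.lt_iff_le_left, le_iff_lt_or_eq, or_imp, forall_and, forall_eq]

theorem Equiv.swap_lt_iff_of_lt_iff {α : Type*} [LinearOrder α] [DecidableEq α] {a b t : α}
    (h : a < t ↔ b < t) (c : α) : Equiv.swap a b c < t ↔ c < t := by
  rcases eq_or_ne c a with rfl | hca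
  · rw [Equiv.swap_apply_left, h]
  rcases eq_or_ne c b with rfl | hcb
  · rw [Equiv.swap_apply_right, h]
  · rw [Equiv.swap_apply_of_ne_of_ne hca hcb]

theorem Equiv.swap_apply_of_lt_of_covBy {α : Type*} [Preorder α] [DecidableEq α] {a b c : α}
    (hab : a ⋖ b) (hc : c < a) : Equiv.swap a b c = c :=
  Equiv.swap_apply_of_ne_of_ne hc.ne (hc.trans hab.lt).ne

namespace qprob

variable {Ω : Type*} [Fintype Ω] {n : ℕ} (μ : Ω → ℝ) (X : Fin n → Ω → Bool)

theorem eq_sum_ite (j : Fin n) :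
    qprob μ X j = ∑ ω, if X j ω = true ∧ ∀ i < j, X i ω = false then μ ω else 0 :=
  Finset.sum_filter _ _

theorem comp_perm_of_lt_iff (σ : Equiv.Perm (Fin n)) {t : Fin n} (ht : σ t = t)
    (hσ : ∀ i, σ i < t ↔ i < t) : qprob μ (fun s => X (σ s)) t = qprob μ X t := by
  have hprefix : ∀ ω, (∀ i < t, X (σ i) ω = false) ↔ ∀ i < t, X i ω = false := fun ω =>
    ⟨fun h i hi => by simpa using h (σ.symm i) ((hσ _).1 (by simpa using hi)),
      fun h i hi => h (σ i) ((hσ i).2 hi)⟩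
  simp only [qprob, ht, hprefix]

variable {i j : Fin n}

theorem comp_swap_of_ne (hij : i ⋖ j) {t : Fin n} (hti : t ≠ i) (htj : t ≠ j) :
    qprob μ (fun s => X (Equiv.swap i j s)) t = qprob μ X t := by
  refine comp_perm_of_lt_iff μ X _ (Equiv.swap_apply_of_ne_of_ne hti htj)
    (Equiv.swap_lt_iff_of_lt_iff ⟨fun h => ?_, hij.lt.trans⟩)
  exact (hij.ge_of_gt h).lt_of_ne htj.symm

theorem comp_swap_add_comp_swap (hij : i ⋖ j) :
    qprob μ (fun s => X (Equiv.swap i j s)) i + qprob μ (fun s => X (Equiv.swap i j s)) j =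
      qprob μ X i + qprob μ X j := by
  simp +contextual only [eq_sum_ite, hij.forall_lt_iff, Equiv.swap_apply_left,
    Equiv.swap_apply_right, Equiv.swap_apply_of_lt_of_covBy hij, ← Finset.sum_add_distrib]
  refine Finset.sum_congr rfl fun ω _ => ?_
  by_cases hpre : ∀ l < i, X l ω = false <;> cases X i ω <;> cases X j ω <;> simp [hpre]

theorem comp_swap_right_le (hμ : ∀ ω, 0 ≤ μ ω) (hij : i ⋖ j) :
    qprob μ (fun s => X (Equiv.swap i j s)) j ≤ qprob μ X i := by
  simp +contextual only [eq_sum_ite, hij.forall_lt_iff, Equiv.swap_apply_left,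
    Equiv.swap_apply_right, Equiv.swap_apply_of_lt_of_covBy hij]
  refine Finset.sum_le_sum fun ω _ => ?_
  split_ifs <;> grind

theorem le_comp_swap_of_expectedProbeTime_le (hij : i ⋖ j)
    (hopt : expectedProbeTime μ X ≤ expectedProbeTime μ (fun s => X (Equiv.swap i j s))) :
    qprob μ X j ≤ qprob μ (fun s => X (Equiv.swap i j s)) j := by
  set Y : Fin n → Ω → Bool := fun s => X (Equiv.swap i j s)
  have hdiff : expectedProbeTime μ Y - expectedProbeTime μ X =
      ((i : ℕ) + 1 : ℝ) * (qprob μ Y i - qprob μ X i) +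
        ((j : ℕ) + 1 : ℝ) * (qprob μ Y j - qprob μ X j) := by
    simp only [expectedProbeTime, ← Finset.sum_sub_distrib, ← mul_sub]
    refine Fintype.sum_eq_add i j hij.ne fun t ht => ?_
    rw [comp_swap_of_ne μ X hij ht.1 ht.2, sub_self, mul_zero]
  have hj : ((j : ℕ) : ℝ) = (i : ℕ) + 1 := by
    exact_mod_cast (Nat.covBy_iff_add_one_eq.1 (Fin.covBy_iff.1 hij)).symm
  have hadd := comp_swap_add_comp_swap μ X hij
  have hchange : expectedProbeTime μ Y - expectedProbeTime μ X = qprob μ Y j - qprob μ X j := by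
    rw [hdiff, hj]
    linear_combination ((i : ℕ) + 1 : ℝ) * hadd
  linarith

end qprob

theorem stmt6_general {Ω : Type*} [Fintype Ω] {n : ℕ} (μ : Ω → ℝ) (X : Fin n → Ω → Bool)
    (hμ0 : ∀ ω, 0 ≤ μ ω)
    (hopt : ∀ σ : Equiv.Perm (Fin n),
      ∑ t : Fin n, ((t : ℕ) + 1 : ℝ) * qprob μ X t
        ≤ ∑ t : Fin n, ((t : ℕ) + 1 : ℝ) * qprob μ (fun s => X (σ s)) t) :
    ∀ s t : Fin n, s ≤ t → qprob μ X t ≤ qprob μ X s :=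
  (antitone_iff_forall_covBy _).2 fun _ _ hij =>
    (qprob.le_comp_swap_of_expectedProbeTime_le μ X hij (hopt _)).trans
      (qprob.comp_swap_right_le μ X hμ0 hij)

/-- If the probing order `X₁, …, Xₙ` minimizes the expected time
`∑ t t·q_t` to find the first active variable (over all reorderings), then
`q₁ ≥ q₂ ≥ … ≥ qₙ`. -/
theorem stmt6 {Ω : Type*} [Fintype Ω] {n : ℕ} (μ : Ω → ℝ) (X : Fin n → Ω → Bool)
    (hμ0 : ∀ ω, 0 ≤ μ ω) (hμ1 : ∑ ω, μ ω = 1)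
    (hopt : ∀ σ : Equiv.Perm (Fin n),
      ∑ t : Fin n, ((t : ℕ) + 1 : ℝ) * qprob μ X t
        ≤ ∑ t : Fin n, ((t : ℕ) + 1 : ℝ) * qprob μ (fun s => X (σ s)) t) :
    ∀ s t : Fin n, s ≤ t → qprob μ X t ≤ qprob μ X s :=
  stmt6_general μ X hμ0 hopt
end

section
/- Let q₁* ≥ q₂* ≥ ... ≥ qₙ* > 0 and c₁*, ..., cₙ* ∈ (0,1] satisfy r_s* = q_s*/c_s* and r_s* − r_{s+1}* = q_s* for all s (with r_{n+1}* = 0). Then for all s ≤ t, 1/c_s* ≤ 1/c_t* + (t − s). -/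
/-! The recursion `q_s / c_s = q_s + q_{s+1} / c_{s+1}`, together with `q_{s+1} ≤ q_s`, gives
`q_s / c_s ≤ q_s + q_s / c_{s+1}`; dividing by `q_s > 0` yields `1 / c_s ≤ 1 / c_{s+1} + 1`, and these
one-step bounds add up along `s, s + 1, …, t`. -/

theorem one_div_le_one_div_add_one_of_div_sub_div_eq {q q' c c' : ℝ} (hq : 0 < q) (hq' : q' ≤ q)
    (hc' : 0 ≤ c') (h : q / c - q' / c' = q) : 1 / c ≤ 1 / c' + 1 := by
  have hbound : q / c ≤ q / c' + q := by
    calc q / c = q' / c' + q := by linarith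
      _ ≤ q / c' + q := by gcongr
  calc 1 / c = q / c / q := by field_simp
    _ ≤ (q / c' + q) / q := by gcongr
    _ = 1 / c' + 1 := by field_simp

theorem Fin.le_add_sub_of_le_succ_add_one {α : Type*} [AddCommGroupWithOne α] [PartialOrder α]
    [IsOrderedAddMonoid α] {m : ℕ} {f : Fin (m + 1) → α}
    (hf : ∀ i : Fin m, f i.castSucc ≤ f i.succ + 1) {s t : Fin (m + 1)} (hst : s ≤ t) :
    f s ≤ f t + (((t : ℕ) - s : ℕ) : α) := by
  have hmono : Monotone fun i : Fin (m + 1) => f i + (i : α) :=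
    Fin.monotone_iff_le_succ.2 fun i => by
      simpa [add_assoc, add_comm (1 : α)] using add_le_add_left (hf i) (i : α)
  have := hmono hst
  rw [Nat.cast_sub (Fin.le_def.1 hst), add_sub, le_sub_iff_add_le]
  exact this

theorem stmt7_general (n : ℕ) (q c : Fin n → ℝ) (r : ℕ → ℝ)
    (hqmono : ∀ s t : Fin n, s ≤ t → q t ≤ q s) (hqpos : ∀ t, 0 < q t)
    (hc : ∀ t, 0 < c t ∧ c t ≤ 1)
    (hr : ∀ s : Fin n, r s = q s / c s)
    (hstep : ∀ s : Fin n, r s - r ((s : ℕ) + 1) = q s) :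
    ∀ s t : Fin n, s ≤ t → 1 / c s ≤ 1 / c t + (((t : ℕ) - (s : ℕ) : ℕ) : ℝ) := by
  obtain _ | m := n
  · exact fun s => s.elim0
  refine fun s t hst => Fin.le_add_sub_of_le_succ_add_one (f := fun i => 1 / c i) (fun i => ?_) hst
  refine one_div_le_one_div_add_one_of_div_sub_div_eq (hqpos _)
    (hqmono _ _ i.castSucc_le_succ) (hc _).1.le ?_
  rw [← hr, ← hr]
  simpa using hstep i.castSucc

/-- If `q₁ ≥ … ≥ qₙ > 0`, `c_s ∈ (0,1]`, `r_s = q_s / c_s`,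
`r_s - r_{s+1} = q_s` and `r_{n+1} = 0`, then for all `s ≤ t`,
`1/c_s ≤ 1/c_t + (t - s)`. -/
theorem stmt7 (n : ℕ) (q c : Fin n → ℝ) (r : ℕ → ℝ)
    (hqmono : ∀ s t : Fin n, s ≤ t → q t ≤ q s) (hqpos : ∀ t, 0 < q t)
    (hc : ∀ t, 0 < c t ∧ c t ≤ 1)
    (hr : ∀ s : Fin n, r s = q s / c s)
    (hrn : r n = 0)
    (hstep : ∀ s : Fin n, r s - r ((s : ℕ) + 1) = q s) :
    ∀ s t : Fin n, s ≤ t → 1 / c s ≤ 1 / c t + (((t : ℕ) - (s : ℕ) : ℕ) : ℝ) :=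
  stmt7_general n q c r hqmono hqpos hc hr hstep
end

section
/- Let q₁* ≥ ... ≥ qₙ* > 0 and c₁*, ..., cₙ* ∈ (0,1] with r_s* = q_s*/c_s* and r_s* − r_{s+1}* = q_s* (r_{n+1}* = 0). Define d_t* = min_{s ≤ t} c_s*. Then d₁* ≥ d₂* ≥ ... ≥ dₙ* > 0, d_t* ≤ c_t* for all t, and ∑_t q_t*/d_t* ≤ 2 ∑_t q_t*/c_t*. -/
/-!
Let `s ≤ t` be the index where the minimum `d_t = c_s` is attained. Telescoping `r` between `s` and
`t`, with every `q_u` for `s ≤ u < t` at most `q_s`, gives `q_s / c_s ≤ q_t / c_t + (t - s) q_s`;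
dividing by `q_s ≥ q_t` yields `1 / c_s ≤ 1 / c_t + (t - s)`, hence
`q_t / d_t ≤ q_t / c_t + t q_t`. Summation by parts gives `∑ (t + 1) q_t = ∑ r_t = ∑ q_t / c_t`,
so the error terms add up to at most `∑ q_t / c_t`.
-/

open Finset

theorem le_add_mul_of_sub_succ_le {r : ℕ → ℝ} {M : ℝ} {a b : ℕ} (hab : a ≤ b)
    (h : ∀ u, a ≤ u → u < b → r u - r (u + 1) ≤ M) : r a ≤ r b + ((b : ℝ) - a) * M := by
  induction b, hab using Nat.le_induction with
  | base => simp
  | succ b hab ih =>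
    have hb := h b hab (Nat.lt_succ_self b)
    have := ih fun u hau hub => h u hau (Nat.lt_succ_of_lt hub)
    push_cast
    linarith

theorem sum_range_succ_mul_sub {R : Type*} [CommRing R] (r : ℕ → R) (m : ℕ) :
    ∑ i ∈ range m, ((i : R) + 1) * (r i - r (i + 1)) = ∑ i ∈ range m, r i - m * r m := by
  induction m with
  | zero => simp
  | succ m ih =>
    rw [sum_range_succ, ih, sum_range_succ]
    push_cast
    ring

section

variable {n : ℕ} {q c : Fin n → ℝ} {r : ℕ → ℝ}

theorem inv_le_inv_add_sub (hqmono : ∀ s t : Fin n, s ≤ t → q t ≤ q s) (hqpos : ∀ t, 0 < q t)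
    (hc : ∀ t, 0 < c t) (hr : ∀ s : Fin n, r s = q s / c s)
    (hstep : ∀ s : Fin n, r s - r ((s : ℕ) + 1) = q s) {s t : Fin n} (hst : s ≤ t) :
    (c s)⁻¹ ≤ (c t)⁻¹ + ((t : ℝ) - s) := by
  have htel : q s / c s ≤ q t / c t + ((t : ℝ) - s) * q s := by
    rw [← hr s, ← hr t]
    refine le_add_mul_of_sub_succ_le (Fin.le_iff_val_le_val.mp hst) fun u hsu hut => ?_
    have hu : u < n := hut.trans t.isLt
    exact (hstep ⟨u, hu⟩).le.trans (hqmono s ⟨u, hu⟩ hsu)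
  have hqs := hqpos s
  have hct := hc t
  calc (c s)⁻¹ = q s / c s / q s := by field_simp
    _ ≤ (q t / c t + ((t : ℝ) - s) * q s) / q s := by gcongr
    _ = q t / q s * (c t)⁻¹ + ((t : ℝ) - s) := by field_simp
    _ ≤ 1 * (c t)⁻¹ + ((t : ℝ) - s) := by
      gcongr
      exact (div_le_one hqs).mpr (hqmono s t hst)
    _ = (c t)⁻¹ + ((t : ℝ) - s) := by rw [one_mul]

theorem div_inf'_Iic_le (hqmono : ∀ s t : Fin n, s ≤ t → q t ≤ q s) (hqpos : ∀ t, 0 < q t)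
    (hc : ∀ t, 0 < c t) (hr : ∀ s : Fin n, r s = q s / c s)
    (hstep : ∀ s : Fin n, r s - r ((s : ℕ) + 1) = q s) (t : Fin n) :
    q t / (Iic t).inf' ⟨t, mem_Iic.mpr le_rfl⟩ c ≤ q t / c t + t * q t := by
  obtain ⟨s, hs, hmin⟩ := exists_mem_eq_inf' ⟨t, mem_Iic.mpr le_rfl⟩ c
  have hst : s ≤ t := mem_Iic.mp hs
  have hinv := inv_le_inv_add_sub hqmono hqpos hc hr hstep hst
  have hs0 : (0 : ℝ) ≤ s := Nat.cast_nonneg _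
  calc q t / (Iic t).inf' _ c = q t * (c s)⁻¹ := by rw [hmin, div_eq_mul_inv]
    _ ≤ q t * ((c t)⁻¹ + ((t : ℝ) - s)) := by gcongr; exact (hqpos t).le
    _ ≤ q t / c t + t * q t := by
      rw [div_eq_mul_inv]
      nlinarith [hqpos t]

theorem sum_mul_le_sum_div (hqpos : ∀ t, 0 < q t) (hr : ∀ s : Fin n, r s = q s / c s)
    (hrn : r n = 0) (hstep : ∀ s : Fin n, r s - r ((s : ℕ) + 1) = q s) :
    ∑ t : Fin n, (t : ℝ) * q t ≤ ∑ t : Fin n, q t / c t :=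
  calc ∑ t : Fin n, (t : ℝ) * q t ≤ ∑ t : Fin n, ((t : ℝ) + 1) * q t :=
        sum_le_sum fun t _ => by nlinarith [hqpos t]
    _ = ∑ i ∈ range n, ((i : ℝ) + 1) * (r i - r (i + 1)) := by
        rw [← Fin.sum_univ_eq_sum_range (fun i => ((i : ℝ) + 1) * (r i - r (i + 1)))]
        simp only [hstep]
    _ = ∑ t : Fin n, q t / c t := by
        rw [sum_range_succ_mul_sub, hrn, mul_zero, sub_zero,
          ← Fin.sum_univ_eq_sum_range r]
        exact sum_congr rfl fun t _ => hr t

end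

/-- With `q₁ ≥ … ≥ qₙ > 0`, `c_s ∈ (0,1]`, `r_s = q_s / c_s`,
`r_s - r_{s+1} = q_s`, `r_{n+1} = 0`, the proxies `d_t = min_{s ≤ t} c_s` satisfy
`d₁ ≥ … ≥ dₙ > 0`, `d_t ≤ c_t`, and `∑ q_t/d_t ≤ 2 ∑ q_t/c_t`. -/
theorem stmt8 (n : ℕ) (q c : Fin n → ℝ) (r : ℕ → ℝ)
    (hqmono : ∀ s t : Fin n, s ≤ t → q t ≤ q s) (hqpos : ∀ t, 0 < q t)
    (hc : ∀ t, 0 < c t ∧ c t ≤ 1)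
    (hr : ∀ s : Fin n, r s = q s / c s)
    (hrn : r n = 0)
    (hstep : ∀ s : Fin n, r s - r ((s : ℕ) + 1) = q s)
    (d : Fin n → ℝ)
    (hd : ∀ t, d t = (Finset.Iic t).inf' ⟨t, Finset.mem_Iic.mpr le_rfl⟩ c) :
    (∀ s t : Fin n, s ≤ t → d t ≤ d s) ∧ (∀ t, 0 < d t) ∧ (∀ t, d t ≤ c t)
    ∧ (∑ t : Fin n, q t / d t ≤ 2 * ∑ t : Fin n, q t / c t) := by
  have hcpos : ∀ t, 0 < c t := fun t => (hc t).1
  refine ⟨fun s t hst => ?_, fun t => ?_, fun t => ?_, ?_⟩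
  · rw [hd, hd]
    exact inf'_mono c (Iic_subset_Iic.mpr hst) _
  · rw [hd]
    exact (lt_inf'_iff _).mpr fun s _ => hcpos s
  · rw [hd]
    exact inf'_le c (mem_Iic.mpr le_rfl)
  calc ∑ t, q t / d t ≤ ∑ t : Fin n, (q t / c t + t * q t) := sum_le_sum fun t _ => by
        rw [hd]
        exact div_inf'_Iic_le hqmono hqpos hcpos hr hstep t
    _ = ∑ t, q t / c t + ∑ t : Fin n, (t : ℝ) * q t := sum_add_distrib
    _ ≤ 2 * ∑ t, q t / c t := by linarith [sum_mul_le_sum_div hqpos hr hrn hstep]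
end

section
/- Let Y₁, ..., Yₙ be Boolean random variables satisfying the conditional negative cylinder property: for any disjoint sets A, B of indices and any event E determined by fixing values of variables outside A ∪ B, Pr(all Y_a = 1 for a ∈ A and all Y_b = 0 for b ∈ B | E) ≥ Pr(all Y_a = 1 for a ∈ A | E) · Pr(all Y_b = 0 for b ∈ B | E). Let A, B, C be disjoint index sets and i ∉ A ∪ B ∪ C. Then Pr(Y_i = 1 | Y_j = 0 ∀ j ∈ B ∪ C) ≥ Pr(Y_i = 1, Y_j = 0 ∀ j ∈ C | Y_j = 0 ∀ j ∈ B) · Pr(Y_j = 0 ∀ j ∈ B) / Pr(Y_j = 0 ∀ j ∈ B ∪ C) ≥ Pr(Y_i = 1 | Y_j = 0 ∀ j ∈ B). -/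
/-- Probability of an event under a probability mass function `μ` on `Fin n → Bool`. -/
def pr {n : ℕ} (μ : (Fin n → Bool) → ℝ) (s : Finset (Fin n → Bool)) : ℝ :=
  ∑ ω ∈ s, μ ω

/-! Intersecting `{Yᵢ = 1, Y = 0 on C}` with `{Y = 0 on B}` gives `{Yᵢ = 1, Y = 0 on B ∪ C}`, so the
middle term is just `Pr(Yᵢ = 1 | Y = 0 on B ∪ C)` and the first inequality is an equality. The second
is the cylinder property for `{i}` and `C` conditioned on `Y = 0 on B`, divided by
`Pr(Y = 0 on C | Y = 0 on B) = Pr(Y = 0 on B ∪ C) / Pr(Y = 0 on B)`. -/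

open Finset

theorem div_le_div_of_div_mul_div_le {α : Type*} [Field α] [LinearOrder α] [IsStrictOrderedRing α]
    {x z p q : α} (hp : 0 < p) (hq : 0 < q) (h : z / p * (q / p) ≤ x / p) : z / p ≤ x / q := by
  rw [div_mul_div_comm, div_le_div_iff₀ (by positivity) hp] at h
  rw [div_le_div_iff₀ hp hq]
  nlinarith

theorem stmt9_general {n : ℕ} (μ : (Fin n → Bool) → ℝ)
    -- Conditional negative cylinder property:
    (hCNCP : ∀ (A B S : Finset (Fin n)) (v : Fin n → Bool),
      Disjoint A B → Disjoint S (A ∪ B) →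
      0 < pr μ (Finset.univ.filter (fun ω => ∀ j ∈ S, ω j = v j)) →
      pr μ (Finset.univ.filter
          (fun ω => (∀ j ∈ A, ω j = true) ∧ (∀ j ∈ B, ω j = false)
              ∧ ∀ j ∈ S, ω j = v j))
        / pr μ (Finset.univ.filter (fun ω => ∀ j ∈ S, ω j = v j))
      ≥ (pr μ (Finset.univ.filter
            (fun ω => (∀ j ∈ A, ω j = true) ∧ ∀ j ∈ S, ω j = v j))
          / pr μ (Finset.univ.filter (fun ω => ∀ j ∈ S, ω j = v j)))
        * (pr μ (Finset.univ.filter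
            (fun ω => (∀ j ∈ B, ω j = false) ∧ ∀ j ∈ S, ω j = v j))
          / pr μ (Finset.univ.filter (fun ω => ∀ j ∈ S, ω j = v j))))
    (A B C : Finset (Fin n)) (i : Fin n)
    (hBC : Disjoint B C)
    (hi : i ∉ A ∪ B ∪ C)
    (hposBC : 0 < pr μ (Finset.univ.filter (fun ω => ∀ j ∈ B ∪ C, ω j = false)))
    (hposB : 0 < pr μ (Finset.univ.filter (fun ω => ∀ j ∈ B, ω j = false))) :
    (pr μ (Finset.univ.filter
          (fun ω => ω i = true ∧ ∀ j ∈ B ∪ C, ω j = false))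
        / pr μ (Finset.univ.filter (fun ω => ∀ j ∈ B ∪ C, ω j = false))
      ≥ (pr μ (Finset.univ.filter
            (fun ω => (ω i = true ∧ ∀ j ∈ C, ω j = false) ∧ ∀ j ∈ B, ω j = false))
          / pr μ (Finset.univ.filter (fun ω => ∀ j ∈ B, ω j = false)))
        * pr μ (Finset.univ.filter (fun ω => ∀ j ∈ B, ω j = false))
        / pr μ (Finset.univ.filter (fun ω => ∀ j ∈ B ∪ C, ω j = false)))
    ∧ ((pr μ (Finset.univ.filter
            (fun ω => (ω i = true ∧ ∀ j ∈ C, ω j = false) ∧ ∀ j ∈ B, ω j = false))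
          / pr μ (Finset.univ.filter (fun ω => ∀ j ∈ B, ω j = false)))
        * pr μ (Finset.univ.filter (fun ω => ∀ j ∈ B, ω j = false))
        / pr μ (Finset.univ.filter (fun ω => ∀ j ∈ B ∪ C, ω j = false))
      ≥ pr μ (Finset.univ.filter (fun ω => ω i = true ∧ ∀ j ∈ B, ω j = false))
          / pr μ (Finset.univ.filter (fun ω => ∀ j ∈ B, ω j = false))) := by
  have hiB : i ∉ B := fun h => hi (mem_union_left _ (mem_union_right _ h))
  have hiC : i ∉ C := fun h => hi (mem_union_right _ h)
  have hcyl := hCNCP {i} C B (fun _ => false) (disjoint_singleton_left.2 hiC)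
    (disjoint_union_right.2 ⟨disjoint_singleton_right.2 hiB, hBC⟩) hposB
  simp only [mem_singleton, forall_eq] at hcyl
  rw [union_comm B C] at hposBC ⊢
  simp only [forall_mem_union, and_assoc] at hposBC ⊢
  rw [div_mul_cancel₀ _ hposB.ne']
  exact ⟨le_rfl, div_le_div_of_div_mul_div_le hposB hposBC hcyl⟩

/-- If `Y₁, …, Yₙ` satisfy the conditional negative cylinder property, then
for disjoint `A, B, C` and `i ∉ A ∪ B ∪ C`,
`Pr(Yᵢ = 1 | 0 on B ∪ C) ≥ Pr(Yᵢ = 1, 0 on C | 0 on B)·Pr(0 on B)/Pr(0 on B ∪ C)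
 ≥ Pr(Yᵢ = 1 | 0 on B)`. -/
theorem stmt9 {n : ℕ} (μ : (Fin n → Bool) → ℝ)
    (hμ0 : ∀ ω, 0 ≤ μ ω) (hμ1 : ∑ ω, μ ω = 1)
    -- Conditional negative cylinder property:
    (hCNCP : ∀ (A B S : Finset (Fin n)) (v : Fin n → Bool),
      Disjoint A B → Disjoint S (A ∪ B) →
      0 < pr μ (Finset.univ.filter (fun ω => ∀ j ∈ S, ω j = v j)) →
      pr μ (Finset.univ.filter
          (fun ω => (∀ j ∈ A, ω j = true) ∧ (∀ j ∈ B, ω j = false)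
              ∧ ∀ j ∈ S, ω j = v j))
        / pr μ (Finset.univ.filter (fun ω => ∀ j ∈ S, ω j = v j))
      ≥ (pr μ (Finset.univ.filter
            (fun ω => (∀ j ∈ A, ω j = true) ∧ ∀ j ∈ S, ω j = v j))
          / pr μ (Finset.univ.filter (fun ω => ∀ j ∈ S, ω j = v j)))
        * (pr μ (Finset.univ.filter
            (fun ω => (∀ j ∈ B, ω j = false) ∧ ∀ j ∈ S, ω j = v j))
          / pr μ (Finset.univ.filter (fun ω => ∀ j ∈ S, ω j = v j))))
    (A B C : Finset (Fin n)) (i : Fin n)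
    (hAB : Disjoint A B) (hAC : Disjoint A C) (hBC : Disjoint B C)
    (hi : i ∉ A ∪ B ∪ C)
    (hposBC : 0 < pr μ (Finset.univ.filter (fun ω => ∀ j ∈ B ∪ C, ω j = false)))
    (hposB : 0 < pr μ (Finset.univ.filter (fun ω => ∀ j ∈ B, ω j = false))) :
    (pr μ (Finset.univ.filter
          (fun ω => ω i = true ∧ ∀ j ∈ B ∪ C, ω j = false))
        / pr μ (Finset.univ.filter (fun ω => ∀ j ∈ B ∪ C, ω j = false))
      ≥ (pr μ (Finset.univ.filter
            (fun ω => (ω i = true ∧ ∀ j ∈ C, ω j = false) ∧ ∀ j ∈ B, ω j = false))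
          / pr μ (Finset.univ.filter (fun ω => ∀ j ∈ B, ω j = false)))
        * pr μ (Finset.univ.filter (fun ω => ∀ j ∈ B, ω j = false))
        / pr μ (Finset.univ.filter (fun ω => ∀ j ∈ B ∪ C, ω j = false)))
    ∧ ((pr μ (Finset.univ.filter
            (fun ω => (ω i = true ∧ ∀ j ∈ C, ω j = false) ∧ ∀ j ∈ B, ω j = false))
          / pr μ (Finset.univ.filter (fun ω => ∀ j ∈ B, ω j = false)))
        * pr μ (Finset.univ.filter (fun ω => ∀ j ∈ B, ω j = false))
        / pr μ (Finset.univ.filter (fun ω => ∀ j ∈ B ∪ C, ω j = false))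
      ≥ pr μ (Finset.univ.filter (fun ω => ω i = true ∧ ∀ j ∈ B, ω j = false))
          / pr μ (Finset.univ.filter (fun ω => ∀ j ∈ B, ω j = false))) :=
  stmt9_general μ hCNCP A B C i hBC hi hposBC hposB
end

section
/- Let M = (S, I) be a matroid with rank function r, and let y ∈ ℝ^S lie in the up-hull of the base polymatroid of M (i.e., there exists z with z ≤ y componentwise, z(T) ≤ r(T) for all T ⊆ S, and z(S) = r(S)). For β ≥ 1, let A_β ⊆ S include each element e independently with probability min(1, β·y_e). Then E[r(A_β)] ≥ (1 − e^{−β})·r(S). -/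
/-!
Let `z ≤ y` witness that `y` lies in the up-hull of the base polytope, and let each element `e`
arrive at an independent exponential time of rate `z e`. At time `t` the arrived set is the
independent sample with marginals `1 - exp (-t z_e)`; let `g t` be its expected rank. Moving
every `e` at rate `z_e (1 - x_e)` gives `g' t = E[∑ₑ z_e (r (A + e) - r A)]`. Every element
outside the span `C` of `A` raises the rank, and `z(C) ≤ r(C) = r(A)`, so this is at least
`r(S) - g t`; hence `g β ≥ (1 - e^{-β}) r(S)`. Finally `1 - e^{-β z_e} ≤ min 1 (β y_e)`, and the
expected rank of an independent sample is monotone in the marginals.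
-/

open Finset Function

namespace IndepSample

lemma one_sub_exp_neg_mul_le_of_sub_le_deriv {g g' : ℝ → ℝ} {c β : ℝ}
    (hg : ∀ t, HasDerivAt g (g' t) t) (hg' : ∀ t, 0 ≤ t → c - g t ≤ g' t) (hg0 : 0 ≤ g 0)
    (hβ : 0 ≤ β) : (1 - Real.exp (-β)) * c ≤ g β := by
  have hH : ∀ t, HasDerivAt (fun s => Real.exp s * (g s - c))
      (Real.exp t * (g t - c) + Real.exp t * g' t) t := fun t =>
    (Real.hasDerivAt_exp t).mul ((hg t).sub_const c)
  have hmono : MonotoneOn (fun s => Real.exp s * (g s - c)) (Set.Ici 0) := by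
    refine monotoneOn_of_deriv_nonneg (convex_Ici 0)
      (fun t _ => (hH t).continuousAt.continuousWithinAt)
      (fun t _ => (hH t).differentiableAt.differentiableWithinAt) fun t ht => ?_
    rw [interior_Ici] at ht
    rw [(hH t).deriv, ← mul_add]
    exact mul_nonneg (Real.exp_pos t).le (by linarith [hg' t (le_of_lt ht)])
  have h := hmono Set.self_mem_Ici hβ hβ
  simp only [Real.exp_zero, one_mul] at h
  have hexp := Real.exp_pos β
  rw [Real.exp_neg]
  field_simp
  linarith

lemma hasDerivAt_exp_neg_mul (c t : ℝ) :
    HasDerivAt (fun s => Real.exp (-(s * c))) (-c * Real.exp (-(t * c))) t :=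
  (hasDerivAt_mul_const c).neg.exp.congr_deriv (mul_comm _ _)

variable {α : Type*}

/-- The probability that a Poisson clock of rate `z e` has rung by time `t`. -/
noncomputable def clockProb (z : α → ℝ) (t : ℝ) (e : α) : ℝ := 1 - Real.exp (-(t * z e))

lemma clockProb_nonneg {z : α → ℝ} (hz : ∀ e, 0 ≤ z e) {t : ℝ} (ht : 0 ≤ t) (e : α) :
    0 ≤ clockProb z t e :=
  sub_nonneg.2 (Real.exp_le_one_iff.2 (neg_nonpos.2 (mul_nonneg ht (hz e))))

lemma clockProb_le_one (z : α → ℝ) (t : ℝ) (e : α) : clockProb z t e ≤ 1 :=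
  sub_le_self _ (Real.exp_pos _).le

lemma clockProb_le_mul (z : α → ℝ) (t : ℝ) (e : α) : clockProb z t e ≤ t * z e :=
  sub_le_comm.1 (Real.one_sub_le_exp_neg _)

lemma hasDerivAt_clockProb (z : α → ℝ) (t : ℝ) (e : α) :
    HasDerivAt (fun s => clockProb z s e) (z e * Real.exp (-(t * z e))) t :=
  ((hasDerivAt_exp_neg_mul (z e) t).const_sub 1).congr_deriv (by ring)

variable [DecidableEq α]

lemma prod_one_sub_update_of_notMem {s : Finset α} {e : α} (he : e ∉ s) (x : α → ℝ) (b : ℝ) :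
    ∏ i ∈ s, (1 - update x e b i) = ∏ i ∈ s, (1 - x i) :=
  prod_congr rfl fun i hi => by rw [update_of_ne (ne_of_mem_of_not_mem hi he)]

lemma rank_union_eq_of_forall_rank_insert_eq {r : Finset α → ℕ} (hr : Monotone r)
    (hsub : ∀ T₁ T₂ : Finset α, r (T₁ ∪ T₂) + r (T₁ ∩ T₂) ≤ r T₁ + r T₂) {A B : Finset α}
    (hB : ∀ e ∈ B, r (insert e A) = r A) : r (A ∪ B) = r A := by
  induction B using Finset.induction_on with
  | empty => simp
  | insert e B _ ih =>
    have hAB := ih fun f hf => hB f (mem_insert_of_mem hf)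
    have heA := hB e (mem_insert_self e B)
    have h := hsub (insert e A) (A ∪ B)
    rw [insert_union, ← union_assoc, union_self] at h
    have hinter : r A ≤ r (insert e A ∩ (A ∪ B)) :=
      hr (subset_inter (subset_insert e A) subset_union_left)
    have hle : r (A ∪ B) ≤ r (insert e (A ∪ B)) := hr (subset_insert e _)
    rw [union_insert]
    omega

variable [Fintype α]

lemma rank_univ_sub_le_sum_mul_rank_insert_sub {r : Finset α → ℕ} (hr : Monotone r)
    (hsub : ∀ T₁ T₂ : Finset α, r (T₁ ∪ T₂) + r (T₁ ∩ T₂) ≤ r T₁ + r T₂)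
    {z : α → ℝ} (hz0 : ∀ e, 0 ≤ z e) (hzT : ∀ T : Finset α, ∑ e ∈ T, z e ≤ r T)
    (hzS : ∑ e, z e = r univ) (A : Finset α) :
    (r univ : ℝ) - r A ≤ ∑ e, z e * ((r (insert e A) : ℝ) - r A) := by
  set C : Finset α := {e | r (insert e A) = r A}
  have hCA : r C = r A := by
    have hAC : A ⊆ C := fun e he => by simp [C, insert_eq_of_mem he]
    have := rank_union_eq_of_forall_rank_insert_eq hr hsub (A := A) (B := C)
      fun e he => by simpa [C] using he
    rwa [union_eq_right.2 hAC] at this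
  -- `r` is `ℕ`-valued, so a rank increase is an increase by at least one
  have hgain : ∀ e ∈ Cᶜ, (1 : ℝ) ≤ (r (insert e A) : ℝ) - r A := fun e he => by
    have hne : r (insert e A) ≠ r A := by simpa [C] using he
    have := hr (subset_insert e A)
    have : r A + 1 ≤ r (insert e A) := by omega
    rw [le_sub_iff_add_le']
    exact_mod_cast this
  calc (r univ : ℝ) - r A = ∑ e ∈ Cᶜ, z e + (∑ e ∈ C, z e - r C) := by
        rw [← hzS, ← sum_add_sum_compl C, hCA]; ring
    _ ≤ ∑ e ∈ Cᶜ, z e * ((r (insert e A) : ℝ) - r A) := by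
        have := hzT C
        have : ∑ e ∈ Cᶜ, z e ≤ ∑ e ∈ Cᶜ, z e * ((r (insert e A) : ℝ) - r A) :=
          sum_le_sum fun e he => le_mul_of_one_le_right (hz0 e) (hgain e he)
        linarith
    _ ≤ ∑ e, z e * ((r (insert e A) : ℝ) - r A) :=
        sum_le_sum_of_subset_of_nonneg (subset_univ _) fun e _ _ =>
          mul_nonneg (hz0 e) (sub_nonneg.2 (Nat.cast_le.2 (hr (subset_insert e A))))

noncomputable def sampleWeight (x : α → ℝ) (A : Finset α) : ℝ :=
  (∏ e ∈ A, x e) * ∏ e ∈ Aᶜ, (1 - x e)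

/-- `multilinearExt f x = E[f A]` for `A` containing each `e` independently with probability
`x e`. -/
noncomputable def multilinearExt (f : Finset α → ℝ) (x : α → ℝ) : ℝ :=
  ∑ A, sampleWeight x A * f A

lemma sampleWeight_nonneg {x : α → ℝ} (h0 : ∀ e, 0 ≤ x e) (h1 : ∀ e, x e ≤ 1) (A : Finset α) :
    0 ≤ sampleWeight x A :=
  mul_nonneg (prod_nonneg fun e _ => h0 e) (prod_nonneg fun e _ => sub_nonneg.2 (h1 e))

lemma sum_sampleWeight (x : α → ℝ) : ∑ A, sampleWeight x A = 1 := by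
  calc ∑ A, sampleWeight x A
      = ∑ A ∈ univ.powerset, (∏ e ∈ A, x e) * ∏ e ∈ univ \ A, (1 - x e) := by
        simp only [powerset_univ, sampleWeight, compl_eq_univ_sdiff]
    _ = ∏ e, (x e + (1 - x e)) := (prod_add _ _ _).symm
    _ = 1 := by simp

lemma sampleWeight_update_of_notMem {x : α → ℝ} {A : Finset α} {e : α} (he : e ∉ A) (a : ℝ) :
    sampleWeight (update x e a) A = (1 - a) * sampleWeight (update x e 0) A := by
  have he' : e ∈ Aᶜ := mem_compl.2 he
  simp only [sampleWeight, ← mul_prod_erase Aᶜ _ he', update_self]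
  rw [prod_update_of_notMem he, prod_update_of_notMem he]
  simp only [prod_one_sub_update_of_notMem (notMem_erase e Aᶜ)]
  ring

lemma sampleWeight_update_insert {x : α → ℝ} {A : Finset α} {e : α} (he : e ∉ A) (a : ℝ) :
    sampleWeight (update x e a) (insert e A) = a * sampleWeight (update x e 0) A := by
  have he' : e ∈ Aᶜ := mem_compl.2 he
  simp only [sampleWeight, ← mul_prod_erase Aᶜ _ he', prod_insert he, compl_insert, update_self,
    prod_update_of_notMem he, prod_one_sub_update_of_notMem (notMem_erase e Aᶜ)]
  ring

lemma sum_eq_sum_notMem_add_insert {M : Type*} [AddCommMonoid M] (e : α) (h : Finset α → M) :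
    ∑ A, h A = ∑ A with e ∉ A, (h A + h (insert e A)) := by
  have := sum_powerset_insert (notMem_erase e (univ : Finset α)) h
  rw [insert_erase (mem_univ e), powerset_univ] at this
  rw [this, sum_add_distrib]
  congr 1 <;> apply sum_congr _ fun _ _ => rfl <;> ext A <;> simp [subset_erase]

lemma multilinearExt_update (f : Finset α → ℝ) (x : α → ℝ) (e : α) (a : ℝ) :
    multilinearExt f (update x e a)
      = ∑ A with e ∉ A, sampleWeight (update x e 0) A * ((1 - a) * f A + a * f (insert e A)) := by
  rw [multilinearExt, sum_eq_sum_notMem_add_insert e]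
  refine sum_congr rfl fun A hA => ?_
  rw [sampleWeight_update_of_notMem (mem_filter.1 hA).2,
    sampleWeight_update_insert (mem_filter.1 hA).2]
  ring

lemma multilinearExt_nonneg {f : Finset α → ℝ} {x : α → ℝ} (hf : ∀ A, 0 ≤ f A)
    (h0 : ∀ e, 0 ≤ x e) (h1 : ∀ e, x e ≤ 1) : 0 ≤ multilinearExt f x :=
  sum_nonneg fun A _ => mul_nonneg (sampleWeight_nonneg h0 h1 A) (hf A)

lemma multilinearExt_update_mono {f : Finset α → ℝ} (hf : Monotone f) {x : α → ℝ}
    (h0 : ∀ i, 0 ≤ x i) (h1 : ∀ i, x i ≤ 1) (e : α) {a b : ℝ} (hab : a ≤ b) :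
    multilinearExt f (update x e a) ≤ multilinearExt f (update x e b) := by
  have hx0 : ∀ i, 0 ≤ update x e 0 i := fun i => by
    rcases eq_or_ne i e with rfl | hi <;> simp [update_of_ne, *]
  have hx1 : ∀ i, update x e 0 i ≤ 1 := fun i => by
    rcases eq_or_ne i e with rfl | hi <;> simp [update_of_ne, *]
  rw [multilinearExt_update, multilinearExt_update]
  refine sum_le_sum fun A _ => mul_le_mul_of_nonneg_left ?_ (sampleWeight_nonneg hx0 hx1 A)
  nlinarith [mul_nonneg (sub_nonneg.2 hab) (sub_nonneg.2 (hf (subset_insert e A)))]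

lemma multilinearExt_mono {f : Finset α → ℝ} (hf : Monotone f) {p q : α → ℝ}
    (hq0 : ∀ e, 0 ≤ q e) (hqp : q ≤ p) (hp1 : ∀ e, p e ≤ 1) :
    multilinearExt f q ≤ multilinearExt f p := by
  suffices ∀ s : Finset α, multilinearExt f q ≤ multilinearExt f (s.piecewise p q) by
    simpa using this univ
  intro s
  induction s using Finset.induction_on with
  | empty => simp
  | insert e s he ih =>
    set x := s.piecewise p q
    have h0 : ∀ i, 0 ≤ x i := fun i => by
      by_cases hi : i ∈ s <;> simp [x, hi, hq0 i, (hq0 i).trans (hqp i)]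
    have h1 : ∀ i, x i ≤ 1 := fun i => by
      by_cases hi : i ∈ s <;> simp [x, hi, hp1 i, (hqp i).trans (hp1 i)]
    have hxe : update x e (q e) = x := by
      rw [update_eq_self_iff, eq_comm]; exact piecewise_eq_of_notMem _ _ _ he
    calc multilinearExt f q ≤ multilinearExt f x := ih
      _ = multilinearExt f (update x e (q e)) := by rw [hxe]
      _ ≤ multilinearExt f (update x e (p e)) := multilinearExt_update_mono hf h0 h1 e (hqp e)
      _ = multilinearExt f ((insert e s).piecewise p q) := by rw [piecewise_insert]

lemma sum_sampleWeight_erase_sub (x : α → ℝ) (f : Finset α → ℝ) (e : α) :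
    ∑ A, (if e ∈ A then sampleWeight x (A.erase e) else -sampleWeight x A) * f A
      = ∑ A, sampleWeight x A * (f (insert e A) - f A) := by
  rw [sum_eq_sum_notMem_add_insert e, sum_eq_sum_notMem_add_insert e]
  refine sum_congr rfl fun A hA => ?_
  have he : e ∉ A := (mem_filter.1 hA).2
  simp [he, erase_insert he]
  ring

lemma sampleWeight_clockProb (z : α → ℝ) (t : ℝ) (A : Finset α) :
    sampleWeight (clockProb z t) A
      = (∏ e ∈ A, clockProb z t e) * Real.exp (-(t * ∑ e ∈ Aᶜ, z e)) := by
  simp only [sampleWeight, clockProb, sub_sub_cancel, mul_sum, ← sum_neg_distrib, Real.exp_sum]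

lemma hasDerivAt_sampleWeight_clockProb (z : α → ℝ) (A : Finset α) (t : ℝ) :
    HasDerivAt (fun s => sampleWeight (clockProb z s) A)
      (∑ e, z e * if e ∈ A then sampleWeight (clockProb z t) (A.erase e)
        else -sampleWeight (clockProb z t) A) t := by
  simp_rw [sampleWeight_clockProb]
  have hP := HasDerivAt.fun_finsetProd (u := A) fun e _ => hasDerivAt_clockProb z t e
  refine (hP.mul (hasDerivAt_exp_neg_mul (∑ e ∈ Aᶜ, z e) t)).congr_deriv ?_
  rw [← sum_add_sum_compl A, sum_mul]
  congr 1
  · refine sum_congr rfl fun e he => ?_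
    rw [if_pos he, compl_erase, sum_insert (notMem_compl.2 he), smul_eq_mul, mul_add, neg_add,
      Real.exp_add]
    ring
  · symm
    rw [sum_congr rfl fun e he => by rw [if_neg (mem_compl.1 he)], ← sum_mul]
    ring

lemma hasDerivAt_multilinearExt_clockProb (f : Finset α → ℝ) (z : α → ℝ) (t : ℝ) :
    HasDerivAt (fun s => multilinearExt f (clockProb z s))
      (∑ A, sampleWeight (clockProb z t) A * ∑ e, z e * (f (insert e A) - f A)) t := by
  refine (HasDerivAt.fun_sum fun A _ =>
    (hasDerivAt_sampleWeight_clockProb z A t).mul_const (f A)).congr_deriv ?_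
  calc ∑ A, (∑ e, z e * if e ∈ A then sampleWeight (clockProb z t) (A.erase e)
          else -sampleWeight (clockProb z t) A) * f A
      = ∑ e, z e * ∑ A, (if e ∈ A then sampleWeight (clockProb z t) (A.erase e)
          else -sampleWeight (clockProb z t) A) * f A := by
        simp_rw [mul_sum, sum_mul]
        rw [sum_comm]
        simp only [mul_assoc]
    _ = ∑ e, z e * ∑ A, sampleWeight (clockProb z t) A * (f (insert e A) - f A) := by
        simp_rw [sum_sampleWeight_erase_sub]
    _ = _ := by
        simp_rw [mul_sum]
        rw [sum_comm]
        simp only [mul_left_comm]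

lemma sub_multilinearExt_le {f g : Finset α → ℝ} {c : ℝ} {x : α → ℝ} (h0 : ∀ e, 0 ≤ x e)
    (h1 : ∀ e, x e ≤ 1) (h : ∀ A, c - f A ≤ g A) :
    c - multilinearExt f x ≤ ∑ A, sampleWeight x A * g A :=
  calc c - multilinearExt f x = ∑ A, sampleWeight x A * (c - f A) := by
        simp only [multilinearExt, mul_sub, sum_sub_distrib, ← sum_mul, sum_sampleWeight, one_mul]
    _ ≤ _ := sum_le_sum fun A _ => mul_le_mul_of_nonneg_left (h A) (sampleWeight_nonneg h0 h1 A)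

end IndepSample

open IndepSample in
theorem stmt10_general {α : Type*} [Fintype α] [DecidableEq α]
    (r : Finset α → ℕ)
    (hrmono : ∀ (T : Finset α) (e : α), r T ≤ r (insert e T))
    (hrsub : ∀ T₁ T₂ : Finset α, r (T₁ ∪ T₂) + r (T₁ ∩ T₂) ≤ r T₁ + r T₂)
    (y : α → ℝ) (β : ℝ) (hβ : 1 ≤ β)
    (hup : ∃ z : α → ℝ, (∀ e, 0 ≤ z e) ∧ (∀ e, z e ≤ y e)
        ∧ (∀ T : Finset α, ∑ e ∈ T, z e ≤ (r T : ℝ))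
        ∧ (∑ e, z e = (r Finset.univ : ℝ))) :
    (1 - Real.exp (-β)) * (r Finset.univ : ℝ)
      ≤ ∑ A : Finset α,
          ((∏ e ∈ A, min 1 (β * y e)) * (∏ e ∈ Aᶜ, (1 - min 1 (β * y e))))
            * (r A : ℝ) := by
  obtain ⟨z, hz0, hzy, hzT, hzS⟩ := hup
  have hβ0 : 0 ≤ β := by linarith
  have hr : Monotone r := monotone_iff_forall_le_insert.2 fun T e _ => hrmono T e
  have hclock : (1 - Real.exp (-β)) * r univ
      ≤ multilinearExt (fun A => (r A : ℝ)) (clockProb z β) :=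
    one_sub_exp_neg_mul_le_of_sub_le_deriv (hasDerivAt_multilinearExt_clockProb _ z)
      (fun t ht => sub_multilinearExt_le (clockProb_nonneg hz0 ht) (clockProb_le_one z t)
        (rank_univ_sub_le_sum_mul_rank_insert_sub hr hrsub hz0 hzT hzS))
      (multilinearExt_nonneg (fun A => Nat.cast_nonneg _) (clockProb_nonneg hz0 le_rfl)
        (clockProb_le_one z 0)) hβ0
  refine hclock.trans (multilinearExt_mono (Nat.mono_cast.comp hr) (clockProb_nonneg hz0 hβ0)
    (fun e => le_min (clockProb_le_one z β e) ?_) fun e => min_le_left _ _)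
  exact (clockProb_le_mul z β e).trans (mul_le_mul_of_nonneg_left (hzy e) hβ0)

/-- Let `r` be the rank function of a matroid on ground set `S` and `y` a
point in the up-hull of the base polymatroid. For `β ≥ 1`, sampling each element `e`
independently with probability `min 1 (β y_e)` yields a random set of expected rank at
least `(1 - e^{-β}) r(S)`. -/
theorem stmt10 {α : Type*} [Fintype α] [DecidableEq α]
    (r : Finset α → ℕ)
    (hr0 : r ∅ = 0)
    (hrmono : ∀ (T : Finset α) (e : α), r T ≤ r (insert e T))
    (hrunit : ∀ (T : Finset α) (e : α), r (insert e T) ≤ r T + 1)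
    (hrsub : ∀ T₁ T₂ : Finset α, r (T₁ ∪ T₂) + r (T₁ ∩ T₂) ≤ r T₁ + r T₂)
    (y : α → ℝ) (β : ℝ) (hβ : 1 ≤ β)
    (hup : ∃ z : α → ℝ, (∀ e, 0 ≤ z e) ∧ (∀ e, z e ≤ y e)
        ∧ (∀ T : Finset α, ∑ e ∈ T, z e ≤ (r T : ℝ))
        ∧ (∑ e, z e = (r Finset.univ : ℝ))) :
    (1 - Real.exp (-β)) * (r Finset.univ : ℝ)
      ≤ ∑ A : Finset α,
          ((∏ e ∈ A, min 1 (β * y e)) * (∏ e ∈ Aᶜ, (1 - min 1 (β * y e))))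
            * (r A : ℝ) :=
  stmt10_general r hrmono hrsub y β hβ hup
end

section
/- Let r be the rank function of a matroid on ground set S and define s(y) = min_{T ⊆ S} ( r(T) + ∑_{e ∈ S∖T} y_e · (r(T∪{e}) − r(T)) ). Then s is concave in y, and for every y in the base polymatroid {y ≥ 0 : y(T) ≤ r(T) ∀T, y(S) = r(S)}, s(y) ≥ r(S). -/
/-- `s(y) = min_{T ⊆ S} ( r(T) + ∑_{e ∉ T} y_e (r(T ∪ {e}) - r(T)) )`. -/
noncomputable def sFun {α : Type*} [Fintype α] [DecidableEq α]
    (r : Finset α → ℕ) (y : α → ℝ) : ℝ :=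
  Finset.inf' Finset.univ ⟨∅, Finset.mem_univ _⟩
    (fun T : Finset α =>
      (r T : ℝ) + ∑ e ∈ Tᶜ, y e * ((r (insert e T) : ℝ) - (r T : ℝ)))

/-!
`s` is a minimum of affine functions of `y`, hence concave. For the lower bound fix `T` and let
`C ⊇ T` be its closure, the set of elements whose addition to `T` does not raise the rank.
Submodularity gives `r(C) = r(T)`, and every `e ∉ C` has marginal gain at least `1`, so the
`T`-term of `s(y)` is at least `r(T) + y(S ∖ C) ≥ y(C) + y(S ∖ C) = r(S)`.
-/

open Finset

theorem ConcaveOn.finset_inf' {𝕜 E β ι : Type*} [Semiring 𝕜] [PartialOrder 𝕜]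
    [AddCommMonoid E] [AddCommMonoid β] [LinearOrder β] [IsOrderedAddMonoid β]
    [SMul 𝕜 E] [Module 𝕜 β] [PosSMulMono 𝕜 β] {s : Set E} {t : Finset ι} (ht : t.Nonempty)
    {f : ι → E → β} (hf : ∀ i ∈ t, ConcaveOn 𝕜 s (f i)) :
    ConcaveOn 𝕜 s fun x ↦ t.inf' ht (f · x) := by
  obtain ⟨i₀, hi₀⟩ := ht
  refine ⟨(hf i₀ hi₀).1, fun x hx y hy a b ha hb hab ↦ le_inf' _ _ fun i hi ↦ ?_⟩
  calc a • t.inf' _ (f · x) + b • t.inf' _ (f · y) ≤ a • f i x + b • f i y := by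
        gcongr <;> exact inf'_le _ hi
    _ ≤ f i (a • x + b • y) := (hf i hi).2 hx hy ha hb hab

theorem concaveOn_const_add_sum_mul {α : Type*} (t : Finset α) (c : ℝ) (w : α → ℝ) :
    ConcaveOn ℝ Set.univ fun y : α → ℝ ↦ c + ∑ e ∈ t, y e * w e := by
  let L : (α → ℝ) →ₗ[ℝ] ℝ :=
    { toFun := fun y ↦ ∑ e ∈ t, y e * w e
      map_add' := fun y z ↦ by simp only [Pi.add_apply, add_mul, sum_add_distrib]
      map_smul' := fun a y ↦ by
        simp only [Pi.smul_apply, smul_eq_mul, mul_sum, mul_assoc, RingHom.id_apply] }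
  exact (concaveOn_const c convex_univ).add (L.concaveOn convex_univ)

theorem concaveOn_sFun {α : Type*} [Fintype α] [DecidableEq α] (r : Finset α → ℕ) :
    ConcaveOn ℝ Set.univ (sFun r) :=
  ConcaveOn.finset_inf' _ fun _ _ ↦ concaveOn_const_add_sum_mul _ _ _

section Rank

variable {α : Type*} [DecidableEq α] {r : Finset α → ℕ}

theorem rank_union_eq_of_forall_rank_insert_eq (hmono : Monotone r)
    (hsub : ∀ A B : Finset α, r (A ∪ B) + r (A ∩ B) ≤ r A + r B) {T Z : Finset α}
    (hZ : ∀ e ∈ Z, r (insert e T) = r T) : r (T ∪ Z) = r T := by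
  induction Z using Finset.induction_on with
  | empty => simp
  | @insert e Z _ ih =>
    have hTZ := ih fun x hx ↦ hZ x (mem_insert_of_mem hx)
    have he := hZ e (mem_insert_self e Z)
    have hsubmod := hsub (T ∪ Z) (insert e T)
    rw [show T ∪ Z ∪ insert e T = T ∪ insert e Z by ext; simp; tauto] at hsubmod
    have hT : r T ≤ r ((T ∪ Z) ∩ insert e T) :=
      hmono (subset_inter subset_union_left (subset_insert e T))
    have hle : r (T ∪ Z) ≤ r (T ∪ insert e Z) :=
      hmono (union_subset_union_right (subset_insert e Z))
    omega

def rankClosure [Fintype α] (r : Finset α → ℕ) (T : Finset α) : Finset α :=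
  {e | r (insert e T) = r T}

theorem subset_rankClosure [Fintype α] (T : Finset α) : T ⊆ rankClosure r T := fun e he ↦ by
  simp [rankClosure, insert_eq_of_mem he]

theorem rank_rankClosure [Fintype α] (hmono : Monotone r)
    (hsub : ∀ A B : Finset α, r (A ∪ B) + r (A ∩ B) ≤ r A + r B) (T : Finset α) :
    r (rankClosure r T) = r T := by
  have h := rank_union_eq_of_forall_rank_insert_eq hmono hsub (T := T) (Z := rankClosure r T)
    fun e he ↦ (mem_filter.1 he).2
  rwa [union_eq_right.2 (subset_rankClosure T)] at h

theorem sum_compl_rankClosure_le [Fintype α] (hmono : Monotone r) {y : α → ℝ}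
    (hy : ∀ e, 0 ≤ y e) (T : Finset α) :
    ∑ e ∈ (rankClosure r T)ᶜ, y e ≤ ∑ e ∈ Tᶜ, y e * ((r (insert e T) : ℝ) - r T) := by
  have hgain : ∀ e, (0 : ℝ) ≤ (r (insert e T) : ℝ) - r T := fun e ↦
    sub_nonneg.2 (Nat.cast_le.2 (hmono (subset_insert e T)))
  calc ∑ e ∈ (rankClosure r T)ᶜ, y e
      ≤ ∑ e ∈ (rankClosure r T)ᶜ, y e * ((r (insert e T) : ℝ) - r T) := by
        refine sum_le_sum fun e he ↦ le_mul_of_one_le_right (hy e) ?_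
        have hne : r (insert e T) ≠ r T := by simpa [rankClosure] using he
        have hlt : r T + 1 ≤ r (insert e T) :=
          lt_of_le_of_ne (hmono (subset_insert e T)) (Ne.symm hne)
        have : (r T : ℝ) + 1 ≤ r (insert e T) := by exact_mod_cast hlt
        linarith
    _ ≤ ∑ e ∈ Tᶜ, y e * ((r (insert e T) : ℝ) - r T) :=
        sum_le_sum_of_subset_of_nonneg (compl_subset_compl.2 (subset_rankClosure T))
          fun e _ _ ↦ mul_nonneg (hy e) (hgain e)

theorem rank_univ_le_sFun [Fintype α] (hmono : Monotone r)
    (hsub : ∀ A B : Finset α, r (A ∪ B) + r (A ∩ B) ≤ r A + r B) {y : α → ℝ}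
    (hy : ∀ e, 0 ≤ y e) (hyr : ∀ T : Finset α, ∑ e ∈ T, y e ≤ (r T : ℝ))
    (hyuniv : ∑ e, y e = (r univ : ℝ)) : (r univ : ℝ) ≤ sFun r y := by
  refine le_inf' _ _ fun T _ ↦ ?_
  have hclosure := hyr (rankClosure r T)
  rw [rank_rankClosure hmono hsub] at hclosure
  have hcompl := sum_compl_rankClosure_le hmono hy T
  have hsplit := sum_add_sum_compl (rankClosure r T) y
  linarith

end Rank

theorem stmt11_general {α : Type*} [Fintype α] [DecidableEq α]
    (r : Finset α → ℕ)
    (hrmono : ∀ (T : Finset α) (e : α), r T ≤ r (insert e T))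
    (hrsub : ∀ T₁ T₂ : Finset α, r (T₁ ∪ T₂) + r (T₁ ∩ T₂) ≤ r T₁ + r T₂) :
    ConcaveOn ℝ Set.univ (sFun r)
    ∧ ∀ y : α → ℝ, (∀ e, 0 ≤ y e) → (∀ T : Finset α, ∑ e ∈ T, y e ≤ (r T : ℝ)) →
        (∑ e, y e = (r Finset.univ : ℝ)) → (r Finset.univ : ℝ) ≤ sFun r y := by
  have hmono : Monotone r := Finset.monotone_iff_forall_le_insert.2 fun T e _ ↦ hrmono T e
  exact ⟨concaveOn_sFun r, fun y hy hyr hyuniv ↦ rank_univ_le_sFun hmono hrsub hy hyr hyuniv⟩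

/-- For a matroid rank function `r`, the function `s` is concave, and for
every `y` in the base polymatroid, `s(y) ≥ r(S)`. -/
theorem stmt11 {α : Type*} [Fintype α] [DecidableEq α]
    (r : Finset α → ℕ)
    (hr0 : r ∅ = 0)
    (hrmono : ∀ (T : Finset α) (e : α), r T ≤ r (insert e T))
    (hrunit : ∀ (T : Finset α) (e : α), r (insert e T) ≤ r T + 1)
    (hrsub : ∀ T₁ T₂ : Finset α, r (T₁ ∪ T₂) + r (T₁ ∩ T₂) ≤ r T₁ + r T₂) :
    ConcaveOn ℝ Set.univ (sFun r)
    ∧ ∀ y : α → ℝ, (∀ e, 0 ≤ y e) → (∀ T : Finset α, ∑ e ∈ T, y e ≤ (r T : ℝ)) →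
        (∑ e, y e = (r Finset.univ : ℝ)) → (r Finset.univ : ℝ) ≤ sFun r y :=
  stmt11_general r hrmono hrsub
end
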